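/- (Rank-one lifting lemma, converse direction) Let A ∈ ℂ^{M×M} be Hermitian positive semidefinite. If there exist v ∈ ℝ and Hermitian PSD matrices B, V with Tr(B) = 1, B ⪰ 0, V ⪰ 0, V - A + vI ⪰ 0, and Tr(AB) - 2v - Tr(V) ≥ 0, then rank A ≤ 1. -/

import Mathlib

open Matrix
open scoped ComplexOrder

lemma psd_diag_nonneg {n : ℕ} {P : Matrix (Fin n) (Fin n) ℂ} (hP : P.PosSemidef) (i : Fin n) :
    0 ≤ P i i := by
  have := hP.dotProduct_mulVec_nonneg (Pi.single i 1)
  simpa [dotProduct, mulVec, Pi.single_apply, Finset.sum_ite_eq] using this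

lemma psd_trace_nonneg {n : ℕ} {P : Matrix (Fin n) (Fin n) ℂ} (hP : P.PosSemidef) :
    0 ≤ P.trace := by
  unfold Matrix.trace
  exact Finset.sum_nonneg fun i _ => psd_diag_nonneg hP i

lemma trace_mul_psd_nonneg {n : ℕ} {P Q : Matrix (Fin n) (Fin n) ℂ}
    (hP : P.PosSemidef) (hQ : Q.PosSemidef) : 0 ≤ (P * Q).trace := by
  obtain ⟨C, rfl⟩ : ∃ C : Matrix (Fin n) (Fin n) ℂ, P = Cᴴ * C := by
    classical
    open scoped MatrixOrder in exact CStarAlgebra.nonneg_iff_eq_star_mul_self.mp hP.nonneg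
  have h1 : (Cᴴ * C * Q).trace = (C * Q * Cᴴ).trace := by
    rw [mul_assoc, trace_mul_comm, mul_assoc]
  rw [h1]
  exact psd_trace_nonneg (hQ.mul_mul_conjTranspose_same C)

theorem rank_one_lifting_converse {M : ℕ} (A : Matrix (Fin M) (Fin M) ℂ)
    (hA : A.PosSemidef)
    (v : ℝ) (B V : Matrix (Fin M) (Fin M) ℂ)
    (hB : B.PosSemidef) (hV : V.PosSemidef) (htrB : B.trace = 1)
    (hlift : (V - A + (v : ℂ) • (1 : Matrix (Fin M) (Fin M) ℂ)).PosSemidef)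
    (hineq : 0 ≤ (A * B).trace.re - 2 * v - V.trace.re) :
    A.rank ≤ 1 := by
  classical
  by_contra hrank
  push_neg at hrank
  have hH := hA.1
  have hcard : 1 < Fintype.card {i // hH.eigenvalues i ≠ 0} := by
    rw [← hH.rank_eq_card_non_zero_eigs]; exact hrank
  obtain ⟨i0, j0, hij0⟩ := Fintype.exists_pair_of_one_lt_card hcard
  have hne : (i0 : Fin M) ≠ (j0 : Fin M) := fun h => hij0 (Subtype.ext h)
  have hpos : ∀ k : {i // hH.eigenvalues i ≠ 0}, 0 < hH.eigenvalues k :=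
    fun k => lt_of_le_of_ne (hA.eigenvalues_nonneg k) (Ne.symm k.2)
  have : Nonempty (Fin M) := ⟨i0⟩
  obtain ⟨m, hm⟩ := Finite.exists_max hH.eigenvalues
  obtain ⟨j, hjm, hj⟩ : ∃ j, j ≠ m ∧ 0 < hH.eigenvalues j := by
    by_cases h : (i0 : Fin M) = m
    · exact ⟨j0, fun hh => hne (h.trans hh.symm), hpos j0⟩
    · exact ⟨i0, h, hpos i0⟩
  set lam := hH.eigenvalues with hlamdef
  set U : Matrix (Fin M) (Fin M) ℂ := (hH.eigenvectorUnitary : Matrix (Fin M) (Fin M) ℂ) with hUdef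
  have hUU : star U * U = 1 := Unitary.coe_star_mul_self _
  have hUU' : U * star U = 1 := Unitary.coe_mul_star_self _
  have hdiag : star U * A * U = diagonal (RCLike.ofReal ∘ lam) :=
    by have := Matrix.IsHermitian.conjStarAlgAut_star_eigenvectorUnitary hH
       rw [Unitary.conjStarAlgAut_star_apply] at this; exact this
  -- Part 1 : (A*B).trace.re ≤ lam m
  have part1 : (A * B).trace.re ≤ lam m := by
    set S : Matrix (Fin M) (Fin M) ℂ := ((lam m : ℝ) : ℂ) • 1 - A with hSdef
    have hconj : star U * S * U = diagonal (fun k => (((lam m - lam k : ℝ)) : ℂ)) := by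
      have : star U * S * U = ((lam m : ℝ) : ℂ) • (star U * U) - star U * A * U := by
        rw [hSdef]; noncomm_ring
      rw [this, hUU, hdiag, smul_one_eq_diagonal, diagonal_sub]
      funext k; simp [Function.comp]
    have hdpsd : (diagonal (fun k => (((lam m - lam k : ℝ)) : ℂ))).PosSemidef := by
      refine PosSemidef.diagonal fun k => ?_
      simp only [Pi.zero_apply]
      rw [Complex.zero_le_real]
      linarith [hm k]
    have hSpsd : S.PosSemidef := by
      have hS : S = U * (star U * S * U) * Uᴴ := by
        rw [Matrix.star_eq_conjTranspose] at hUU' ⊢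
        rw [← mul_assoc, ← mul_assoc, hUU', one_mul, mul_assoc, hUU', mul_one]
      rw [hS, hconj]
      exact hdpsd.mul_mul_conjTranspose_same U
    have htr : 0 ≤ (S * B).trace := trace_mul_psd_nonneg hSpsd hB
    have : (S * B).trace = ((lam m : ℝ) : ℂ) - (A * B).trace := by
      rw [hSdef, sub_mul, trace_sub, smul_mul_assoc, one_mul, trace_smul, htrB]
      simp
    rw [this] at htr
    have := (Complex.le_def.mp htr).1
    simp only [Complex.zero_re, Complex.sub_re, Complex.ofReal_re] at this
    linarith
  -- Part 2 : (lam m - v) + (lam j - v) ≤ V.trace.re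
  have part2 : (lam m - v) + (lam j - v) ≤ V.trace.re := by
    set W : Matrix (Fin M) (Fin M) ℂ := V - A + (v : ℂ) • 1 with hWdef
    set W' : Matrix (Fin M) (Fin M) ℂ := star U * W * U with hW'def
    set V' : Matrix (Fin M) (Fin M) ℂ := star U * V * U with hV'def
    have hW'psd : W'.PosSemidef := by
      rw [hW'def, Matrix.star_eq_conjTranspose]
      exact hlift.conjTranspose_mul_mul_same U
    have hV'psd : V'.PosSemidef := by
      rw [hV'def, Matrix.star_eq_conjTranspose]
      exact hV.conjTranspose_mul_mul_same U
    have htrV : V'.trace = V.trace := by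
      rw [hV'def, mul_assoc, trace_mul_comm, mul_assoc, hUU', mul_one]
    have hVW : V' = W' + diagonal (RCLike.ofReal ∘ lam) - (v : ℂ) • 1 := by
      rw [hV'def, hW'def, ← hdiag, hWdef]
      have h1 : star U * ((v : ℂ) • 1) * U = (v : ℂ) • 1 := by
        rw [mul_smul_comm, smul_mul_assoc, mul_one, hUU]
      calc star U * V * U
          = star U * (V - A + (v:ℂ) • 1) * U + star U * A * U - star U * ((v:ℂ) • 1) * U := by
            noncomm_ring
        _ = _ := by rw [h1]
    have hdiagentry : ∀ k, lam k - v ≤ (V' k k).re := by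
      intro k
      have h0 : 0 ≤ (W' k k).re := (Complex.le_def.mp (psd_diag_nonneg hW'psd k)).1
      have : V' k k = W' k k + ((lam k : ℝ) : ℂ) - (v : ℂ) := by
        rw [hVW]
        simp [Matrix.sub_apply, Matrix.add_apply, Matrix.smul_apply, Matrix.one_apply,
          Matrix.diagonal_apply_eq, Function.comp]
      rw [this]
      simp only [Complex.sub_re, Complex.add_re, Complex.ofReal_re]
      linarith
    have hsum : (lam m - v) + (lam j - v) ≤ ∑ k, (V' k k).re := by
      have hsub : ({m, j} : Finset (Fin M)) ⊆ Finset.univ := Finset.subset_univ _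
      have hnn : ∀ k ∈ Finset.univ \ ({m, j} : Finset (Fin M)), 0 ≤ (V' k k).re :=
        fun k _ => (Complex.le_def.mp (psd_diag_nonneg hV'psd k)).1
      have h2 : ∑ k ∈ ({m, j} : Finset (Fin M)), (V' k k).re ≤ ∑ k, (V' k k).re := by
        refine Finset.sum_le_sum_of_subset_of_nonneg hsub fun k hk hk' => ?_
        exact (Complex.le_def.mp (psd_diag_nonneg hV'psd k)).1
      have h3 : ∑ k ∈ ({m, j} : Finset (Fin M)), (V' k k).re = (V' m m).re + (V' j j).re := by
        rw [Finset.sum_pair (Ne.symm hjm)]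
      have := hdiagentry m
      have := hdiagentry j
      linarith
    have : V.trace.re = ∑ k, (V' k k).re := by
      rw [← htrV]
      simp [Matrix.trace, Matrix.diag, Complex.re_sum]
    linarith
  linarith [hj, hineq, part1, part2]
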